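/- arXiv:2105.07204 — 4 statements merged into one kernel-verified Lean document; each statement's English description precedes it below -/
import Mathlib

section
/- Let F : ℝⁿ → ℝⁿ be C¹, X ⊂ ℝⁿ an interval (box) set, x ∈ X, and C an invertible n×n matrix. Define K(x, X, F) := x − C·F(x) + (Id − C·[DF(X)])·(X − x), where [DF(X)] is an interval matrix enclosure of the derivatives of F over X. If K(x, X, F) ⊂ int X, then there exists a unique point x* ∈ X with F(x*) = 0. -/
open Set

/-!
The simplified Newton map `g y = y - C F(y)` has the zeros of `F` as its fixed points, as `C` is
invertible. The mean value theorem, applied row by row, gives `F y - F y' = A (y - y')` for some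
`A ∈ [DF(X)]`, so `g y = x - C F(x) + (Id - C A)(y - x) ∈ K ⊆ int X` and
`g y - g y' = (Id - C A)(y - y')`. Evaluating the Krawczyk set at the corners of the box shows
`∑ⱼ |Lᵢⱼ| wⱼ < wᵢ` for `L = Id - C A` and the box widths `w = b - a`, so `g` strictly decreases the
sup distance weighted by `w`. On the compact box, a minimiser of `y ↦ d(y, g y)` is then the unique
fixed point of `g`.
-/

open Matrix

section BoxMatrix

variable {ι : Type*} [Fintype ι]

def intervalEnclosure [DecidableEq ι] (F : (ι → ℝ) → ι → ℝ) (X : Set (ι → ℝ)) :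
    Set (Matrix ι ι ℝ) :=
  {A | ∀ i j, A i j ∈ Icc (sInf ((fun y => fderiv ℝ F y (Pi.single j 1) i) '' X))
    (sSup ((fun y => fderiv ℝ F y (Pi.single j 1) i) '' X))}

theorem exists_mem_intervalEnclosure_sub_eq_mulVec [DecidableEq ι] {F : (ι → ℝ) → ι → ℝ}
    (hF : ContDiff ℝ 1 F) {X : Set (ι → ℝ)} (hXc : Convex ℝ X) (hXk : IsCompact X)
    {y y' : ι → ℝ} (hy : y ∈ X) (hy' : y' ∈ X) :
    ∃ A ∈ intervalEnclosure F X, F y - F y' = A *ᵥ (y - y') := by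
  have hdiff : Differentiable ℝ F := hF.differentiable one_ne_zero
  have hrow : ∀ i, ∃ ξ ∈ X, F y i - F y' i = fderiv ℝ F ξ (y - y') i := by
    intro i
    obtain ⟨ξ, hξ, h⟩ := domain_mvt (f := fun z => F z i)
      (f' := fun z => (ContinuousLinearMap.proj i).comp (fderiv ℝ F z))
      (fun z _ =>
        ((hasFDerivAt_apply (𝕜 := ℝ) i (F z)).comp z (hdiff z).hasFDerivAt).hasFDerivWithinAt)
      hXc hy' hy
    exact ⟨ξ, hXc.segment_subset hy' hy hξ, h⟩
  choose ξ hξX hξ using hrow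
  have hpartial : ∀ i j, Continuous fun z => fderiv ℝ F z (Pi.single j 1) i := fun i j =>
    (continuous_apply i).comp ((hF.continuous_fderiv one_ne_zero).clm_apply continuous_const)
  refine ⟨Matrix.of fun i j => fderiv ℝ F (ξ i) (Pi.single j 1) i, fun i j => ⟨?_, ?_⟩, ?_⟩
  · exact csInf_le (hXk.image (hpartial i j)).bddBelow (mem_image_of_mem _ (hξX i))
  · exact le_csSup (hXk.image (hpartial i j)).bddAbove (mem_image_of_mem _ (hξX i))
  · ext i
    rw [Pi.sub_apply, hξ i, ← ContinuousLinearMap.coe_coe, ← LinearMap.toMatrix'_mulVec]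
    rfl

theorem sub_mulVec_eq_add_mulVec_sub [DecidableEq ι] {R : Type*} [CommRing R]
    {C A : Matrix ι ι R} {u v x y : ι → R} (h : u - v = A *ᵥ (y - x)) :
    y - C *ᵥ u = x - C *ᵥ v + (1 - C * A) *ᵥ (y - x) := by
  rw [sub_mulVec, one_mulVec, ← mulVec_mulVec, ← h, mulVec_sub]
  abel

theorem mem_interior_Icc_pi {a b y : ι → ℝ} :
    y ∈ interior (Icc a b) ↔ ∀ i, y i ∈ Ioo (a i) (b i) := by
  rw [← pi_univ_Icc, interior_pi_set finite_univ]
  simp only [interior_Icc, mem_univ_pi]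

theorem sum_abs_mul_sub_lt_of_mapsTo_interior {L : Matrix ι ι ℝ} {p x a b : ι → ℝ} (hab : a ≤ b)
    (h : ∀ y ∈ Icc a b, p + L *ᵥ (y - x) ∈ interior (Icc a b)) (i : ι) :
    ∑ j, |L i j| * (b j - a j) < b i - a i := by
  set yp : ι → ℝ := fun j => if 0 ≤ L i j then b j else a j
  set ym : ι → ℝ := fun j => if 0 ≤ L i j then a j else b j
  have hcorner : ∀ c : ι → ℝ, (∀ j, c j = a j ∨ c j = b j) → c ∈ Icc a b := fun c hc =>
    ⟨fun j => by rcases hc j with h | h <;> simp [h, hab j],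
      fun j => by rcases hc j with h | h <;> simp [h, hab j]⟩
  have hyp : yp ∈ Icc a b := hcorner yp fun j => by by_cases h : 0 ≤ L i j <;> simp [yp, h]
  have hym : ym ∈ Icc a b := hcorner ym fun j => by by_cases h : 0 ≤ L i j <;> simp [ym, h]
  have hsum : ∑ j, |L i j| * (b j - a j) = (L *ᵥ (yp - x)) i - (L *ᵥ (ym - x)) i := by
    simp only [mulVec, dotProduct, ← Finset.sum_sub_distrib]
    refine Finset.sum_congr rfl fun j _ => ?_
    by_cases h : 0 ≤ L i j
    · simp only [yp, ym, h, if_true, abs_of_nonneg h, Pi.sub_apply]; ring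
    · simp only [yp, ym, h, if_false, abs_of_neg (not_le.1 h), Pi.sub_apply]; ring
  have hpi := (mem_interior_Icc_pi.1 (h yp hyp) i).2
  have hmi := (mem_interior_Icc_pi.1 (h ym hym) i).1
  simp only [Pi.add_apply] at hpi hmi
  linarith

theorem norm_mulVec_div_lt {L : Matrix ι ι ℝ} {w u : ι → ℝ} (hw : ∀ i, 0 < w i)
    (hL : ∀ i, ∑ j, |L i j| * w j < w i) (hu : u ≠ 0) : ‖L *ᵥ u / w‖ < ‖u / w‖ := by
  have hr : 0 < ‖u / w‖ := norm_pos_iff.2 fun h =>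
    hu (funext fun j => by simpa [(hw j).ne'] using congrFun h j)
  have hcoord : ∀ j, |u j| ≤ w j * ‖u / w‖ := fun j => by
    have := norm_le_pi_norm (u / w) j
    rwa [Pi.div_apply, Real.norm_eq_abs, abs_div, abs_of_pos (hw j), div_le_iff₀ (hw j),
      mul_comm] at this
  refine (pi_norm_lt_iff hr).2 fun i => ?_
  rw [Pi.div_apply, Real.norm_eq_abs, abs_div, abs_of_pos (hw i), div_lt_iff₀ (hw i)]
  calc |(L *ᵥ u) i| ≤ ∑ j, |L i j| * |u j| := by
        simpa only [mulVec, dotProduct, abs_mul] using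
          Finset.abs_sum_le_sum_abs (fun j => L i j * u j) Finset.univ
    _ ≤ ∑ j, |L i j| * (w j * ‖u / w‖) :=
        Finset.sum_le_sum fun j _ => mul_le_mul_of_nonneg_left (hcoord j) (abs_nonneg _)
    _ = (∑ j, |L i j| * w j) * ‖u / w‖ := by simp only [Finset.sum_mul, mul_assoc]
    _ < w i * ‖u / w‖ := by gcongr; exact hL i
    _ = ‖u / w‖ * w i := mul_comm _ _

end BoxMatrix

theorem IsCompact.existsUnique_fixedPoint {α : Type*} [TopologicalSpace α] {S : Set α}
    (hS : IsCompact S) (hne : S.Nonempty) {g : α → α} (hg : MapsTo g S S) {d : α → α → ℝ}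
    (hd : ContinuousOn (fun y => d y (g y)) S)
    (hlt : ∀ y ∈ S, ∀ y' ∈ S, y ≠ y' → d (g y) (g y') < d y y') :
    ∃! y, y ∈ S ∧ g y = y := by
  obtain ⟨y, hy, hmin⟩ := hS.exists_isMinOn hne hd
  have hfix : g y = y := by
    by_contra hne
    exact (hmin (hg hy)).not_gt (hlt y hy (g y) (hg hy) (Ne.symm hne))
  refine ⟨y, ⟨hy, hfix⟩, fun y' ⟨hy', hfix'⟩ => ?_⟩
  by_contra hne
  have := hlt y' hy' y hy hne
  rw [hfix, hfix'] at this
  exact lt_irrefl _ this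

/-- **Krawczyk method.** If the Krawczyk set
`K(x, X, F) = x - C·F(x) + (Id - C·[DF(X)])·(X - x)` is contained in the interior of the
interval (box) set `X`, then `F` has a unique zero in `X`. Here `[DF(X)]` is the interval
matrix enclosure of the derivatives of `F` over `X`. -/
theorem krawczyk_method (n : ℕ) (F : (Fin n → ℝ) → (Fin n → ℝ))
    (hF : ContDiff ℝ 1 F)
    (a b : Fin n → ℝ) (X : Set (Fin n → ℝ)) (hX : X = Set.univ.pi fun i => Set.Icc (a i) (b i))
    (x : Fin n → ℝ) (hx : x ∈ X)
    (C : Matrix (Fin n) (Fin n) ℝ) (hC : IsUnit C)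
    -- the interval matrix enclosure of the derivatives of `F` over `X`
    (D : Set (Matrix (Fin n) (Fin n) ℝ))
    (hD : D = {A | ∀ i j,
      A i j ∈ Set.Icc
        (sInf ((fun y => fderiv ℝ F y (Pi.single j 1) i) '' X))
        (sSup ((fun y => fderiv ℝ F y (Pi.single j 1) i) '' X))})
    -- the Krawczyk set
    (K : Set (Fin n → ℝ))
    (hK : K = (fun p : Matrix (Fin n) (Fin n) ℝ × (Fin n → ℝ) =>
      x - C.mulVec (F x) + ((1 : Matrix (Fin n) (Fin n) ℝ) - C * p.1).mulVec (p.2 - x)) ''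
      (D ×ˢ X))
    (hKsub : K ⊆ interior X) :
    ∃! z : Fin n → ℝ, z ∈ X ∧ F z = 0 := by
  rw [pi_univ_Icc] at hX
  subst hX hK
  set g : (Fin n → ℝ) → Fin n → ℝ := fun y => y - C *ᵥ F y
  have hmvt : ∀ y ∈ Icc a b, ∀ y' ∈ Icc a b, ∃ A ∈ D, F y - F y' = A *ᵥ (y - y') :=
    fun y hy y' hy' => hD ▸ exists_mem_intervalEnclosure_sub_eq_mulVec hF (convex_Icc a b)
      isCompact_Icc hy hy'
  have hgX : ∀ y ∈ Icc a b, g y ∈ interior (Icc a b) := fun y hy => by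
    obtain ⟨A, hA, hAy⟩ := hmvt y hy x hx
    exact hKsub ⟨(A, y), ⟨hA, hy⟩, (sub_mulVec_eq_add_mulVec_sub hAy).symm⟩
  have hw : ∀ i, 0 < (b - a) i := fun i => by
    have := mem_interior_Icc_pi.1 (hgX x hx) i
    exact sub_pos.2 (this.1.trans this.2)
  have hcontr : ∀ y ∈ Icc a b, ∀ y' ∈ Icc a b, y ≠ y' →
      ‖(g y - g y') / (b - a)‖ < ‖(y - y') / (b - a)‖ := fun y hy y' hy' hne => by
    obtain ⟨A, hA, hAy⟩ := hmvt y hy y' hy'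
    have hrow := sum_abs_mul_sub_lt_of_mapsTo_interior (L := 1 - C * A) (p := x - C *ᵥ F x)
      (hx.1.trans hx.2) fun z hz => hKsub ⟨(A, z), ⟨hA, hz⟩, rfl⟩
    rw [show g y - g y' = (1 - C * A) *ᵥ (y - y') by
      simp only [g, sub_mulVec_eq_add_mulVec_sub hAy]; abel]
    exact norm_mulVec_div_lt hw hrow (sub_ne_zero.2 hne)
  have hgc : Continuous g := by fun_prop
  have hfix_iff : ∀ y, g y = y ↔ F y = 0 := fun y =>
    sub_eq_self.trans ((mulVec_injective_iff_isUnit.2 hC).eq_iff' (mulVec_zero C))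
  simpa only [hfix_iff] using isCompact_Icc.existsUnique_fixedPoint ⟨x, hx⟩
    (fun y hy => interior_subset (hgX y hy)) (d := fun y y' => ‖(y - y') / (b - a)‖)
    (by fun_prop) hcontr
end

section
/- Let a₁, a₂, a₃ ∈ (0,1), and define Q(v₁,v₂,v₃,v₄) = |v₁| − max{|v₂|/a₁, |v₃|/a₂, |v₄|/a₃}, with cone Q⁺(0) = {v : Q(v) ≥ 0}. Let B ⊂ ℝ⁴ be convex with 0 ∈ B, and f : B → ℝ⁴ a C¹ map with f(0) = 0. Suppose every Jacobian Df(x) for x ∈ B, written in block form ((A₁₁, A₁₂), (A₂₁, A₂₂)) with A₁₁ a 1×1 block and A₁₂ a 1×3 block, satisfies A₁₁ > c > 0 and ‖A₁₂‖_max ≤ K. Let m = c − K·max(a₁,a₂,a₃). Then for every v ∈ Q⁺(0) ∩ B one has ‖f(v)‖_max ≥ m·‖v‖_max. -/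
/-!
Pair `f` with the functional `ℓ = sign(v₀) · e₀*`. By the mean value theorem on the segment
`[0, v] ⊆ B`, `ℓ (f v) = ℓ (Df(z) v)` for some `z ∈ B`. In the cone every `|vᵢ|` is at most
`max aᵢ · |v₀|`, so the first row of `Df(z)` gives `ℓ (Df(z) v) ≥ c|v₀| - K · max aᵢ · |v₀| = m|v₀|`,
and `|v₀| = ‖v‖` because every `aᵢ < 1`.
-/

open Finset

theorem abs_sign_le_one {α : Type*} [Ring α] [LinearOrder α] [IsStrictOrderedRing α] (x : α) :
    |(SignType.sign x : α)| ≤ 1 := by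
  rcases lt_trichotomy x 0 with h | h | h <;> simp [h]

theorem sign_mul_le_abs {α : Type*} [Ring α] [LinearOrder α] [IsStrictOrderedRing α] (x y : α) :
    SignType.sign x * y ≤ |y| :=
  (le_abs_self _).trans (abs_mul _ y ▸ mul_le_of_le_one_left (abs_nonneg y) (abs_sign_le_one x))

theorem le_apply_sub_of_le_apply_fderiv {E F : Type*} [NormedAddCommGroup E] [NormedSpace ℝ E]
    [NormedAddCommGroup F] [NormedSpace ℝ F] {f : E → F} {f' : E → E →L[ℝ] F} {B : Set E}
    (hB : Convex ℝ B) (hf : ∀ x ∈ B, HasFDerivWithinAt f (f' x) B x) (ℓ : F →L[ℝ] ℝ)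
    {x y : E} (hx : x ∈ B) (hy : y ∈ B) {μ : ℝ} (hμ : ∀ z ∈ B, μ ≤ ℓ (f' z (y - x))) :
    μ ≤ ℓ (f y) - ℓ (f x) := by
  obtain ⟨z, hz, hmvt⟩ := domain_mvt (f := ℓ ∘ f)
    (fun z hz => ℓ.hasFDerivAt.comp_hasFDerivWithinAt z (hf z hz)) hB hx hy
  simp only [Function.comp_apply] at hmvt
  rw [hmvt]
  exact hμ z (hB.segment_subset hx hy hz)

theorem mul_abs_sub_sum_le_sign_mul_dotProduct {n : ℕ} (r v : Fin (n + 1) → ℝ) :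
    r 0 * |v 0| - ∑ i : Fin n, |r i.succ| * |v i.succ| ≤ SignType.sign (v 0) * (r ⬝ᵥ v) := by
  have htail : -∑ i : Fin n, |r i.succ| * |v i.succ| ≤
      SignType.sign (v 0) * ∑ i : Fin n, r i.succ * v i.succ := by
    refine neg_le_of_abs_le ?_
    calc |(SignType.sign (v 0) : ℝ) * ∑ i : Fin n, r i.succ * v i.succ|
        ≤ |∑ i : Fin n, r i.succ * v i.succ| := by
          rw [abs_mul]; exact mul_le_of_le_one_left (abs_nonneg _) (abs_sign_le_one _)
      _ ≤ ∑ i : Fin n, |r i.succ| * |v i.succ| := by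
          simpa only [abs_mul] using abs_sum_le_sum_abs (fun i : Fin n => r i.succ * v i.succ) univ
  rw [dotProduct, Fin.sum_univ_succ, mul_add, mul_left_comm, sign_mul_self]
  linarith

theorem sum_abs_mul_abs_le_of_abs_le {ι : Type*} (s : Finset ι) (r v : ι → ℝ) {K b : ℝ}
    (hb : 0 ≤ b) (hr : ∑ i ∈ s, |r i| ≤ K) (hv : ∀ i ∈ s, |v i| ≤ b) :
    ∑ i ∈ s, |r i| * |v i| ≤ K * b :=
  calc ∑ i ∈ s, |r i| * |v i| ≤ ∑ i ∈ s, |r i| * b :=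
        sum_le_sum fun i hi => mul_le_mul_of_nonneg_left (hv i hi) (abs_nonneg _)
    _ = (∑ i ∈ s, |r i|) * b := (sum_mul ..).symm
    _ ≤ K * b := mul_le_mul_of_nonneg_right hr hb

theorem sub_mul_abs_le_sign_mul_dotProduct {n : ℕ} (r v : Fin (n + 1) → ℝ) {c K A : ℝ}
    (hA : 0 ≤ A) (hc : c ≤ r 0) (hK : ∑ i : Fin n, |r i.succ| ≤ K)
    (hv : ∀ i : Fin n, |v i.succ| ≤ A * |v 0|) :
    (c - K * A) * |v 0| ≤ SignType.sign (v 0) * (r ⬝ᵥ v) :=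
  calc (c - K * A) * |v 0| = c * |v 0| - K * (A * |v 0|) := by ring
    _ ≤ r 0 * |v 0| - ∑ i : Fin n, |r i.succ| * |v i.succ| := by
        gcongr
        exact sum_abs_mul_abs_le_of_abs_le _ _ _ (by positivity) hK fun i _ => hv i
    _ ≤ SignType.sign (v 0) * (r ⬝ᵥ v) := mul_abs_sub_sum_le_sign_mul_dotProduct r v

theorem pi_norm_eq_abs_of_abs_le {ι : Type*} [Fintype ι] (v : ι → ℝ) (i₀ : ι)
    (hv : ∀ i, |v i| ≤ |v i₀|) : ‖v‖ = |v i₀| :=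
  le_antisymm ((pi_norm_le_iff_of_nonneg (abs_nonneg _)).mpr hv) (norm_le_pi_norm v i₀)

theorem expansion_in_cones_general
    (a₁ a₂ a₃ : ℝ) (ha₁ : a₁ ∈ Set.Ioo (0:ℝ) 1) (ha₂ : a₂ ∈ Set.Ioo (0:ℝ) 1)
    (ha₃ : a₃ ∈ Set.Ioo (0:ℝ) 1)
    (B : Set (Fin 4 → ℝ)) (hB : Convex ℝ B) (h0B : (0 : Fin 4 → ℝ) ∈ B)
    (f : (Fin 4 → ℝ) → (Fin 4 → ℝ)) (hf0 : f 0 = 0)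
    (J : (Fin 4 → ℝ) → Matrix (Fin 4) (Fin 4) ℝ)
    (hderiv : ∀ x ∈ B, HasFDerivWithinAt f ((J x).mulVecLin.toContinuousLinearMap) B x)
    (c K : ℝ)
    (hA11 : ∀ x ∈ B, c < J x 0 0)
    (hA12 : ∀ x ∈ B, |J x 0 1| + |J x 0 2| + |J x 0 3| ≤ K)
    (m : ℝ) (hm : m = c - K * max a₁ (max a₂ a₃)) :
    ∀ v ∈ B, |v 1| ≤ a₁ * |v 0| → |v 2| ≤ a₂ * |v 0| → |v 3| ≤ a₃ * |v 0| →
      m * ‖v‖ ≤ ‖f v‖ := by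
  intro v hv h₁ h₂ h₃
  set A := max a₁ (max a₂ a₃)
  have hcone : ∀ i : Fin 3, |v i.succ| ≤ A * |v 0| := by
    intro i
    fin_cases i
    · exact h₁.trans (by gcongr; exact le_max_left _ _)
    · exact h₂.trans (by gcongr; exact (le_max_left _ _).trans (le_max_right _ _))
    · exact h₃.trans (by gcongr; exact (le_max_right _ _).trans (le_max_right _ _))
  have hA : A ∈ Set.Ioo (0:ℝ) 1 :=
    ⟨ha₁.1.trans_le (le_max_left _ _), max_lt ha₁.2 (max_lt ha₂.2 ha₃.2)⟩
  have hnorm : ‖v‖ = |v 0| := by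
    refine pi_norm_eq_abs_of_abs_le v 0 fun i => ?_
    refine Fin.cases le_rfl (fun i => (hcone i).trans ?_) i
    exact mul_le_of_le_one_left (abs_nonneg _) hA.2.le
  let ℓ : (Fin 4 → ℝ) →L[ℝ] ℝ := (SignType.sign (v 0) : ℝ) • ContinuousLinearMap.proj 0
  have hrow : ∀ z ∈ B, m * |v 0| ≤ ℓ ((J z).mulVecLin.toContinuousLinearMap (v - 0)) := by
    intro z hz
    have hK : ∑ i : Fin 3, |J z 0 i.succ| ≤ K := by
      simpa [Fin.sum_univ_three] using hA12 z hz
    simpa [hm, ℓ, Matrix.mulVec] using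
      sub_mul_abs_le_sign_mul_dotProduct (J z 0) v hA.1.le (hA11 z hz).le hK hcone
  rw [hnorm]
  calc m * |v 0| ≤ ℓ (f v) - ℓ (f 0) := le_apply_sub_of_le_apply_fderiv hB hderiv ℓ h0B hv hrow
    _ ≤ |f v 0| := by
        simpa [ℓ, hf0] using sign_mul_le_abs (v 0) (f v 0)
    _ ≤ ‖f v‖ := norm_le_pi_norm (f v) 0

/-- **Expansion in cones.** If every Jacobian of `f` over the convex set `B` has its
`(1,1)` entry greater than `c > 0` and the induced max-norm of the remaining entries of the
first row (i.e. the sum of their absolute values) bounded by `K`, then on the cone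
`Q⁺(0) = {v : |v₂| ≤ a₁|v₁|, |v₃| ≤ a₂|v₁|, |v₄| ≤ a₃|v₁|}` intersected with `B` one has
`‖f(v)‖_max ≥ (c - K·max(a₁,a₂,a₃))·‖v‖_max`. -/
theorem expansion_in_cones
    (a₁ a₂ a₃ : ℝ) (ha₁ : a₁ ∈ Set.Ioo (0:ℝ) 1) (ha₂ : a₂ ∈ Set.Ioo (0:ℝ) 1)
    (ha₃ : a₃ ∈ Set.Ioo (0:ℝ) 1)
    (B : Set (Fin 4 → ℝ)) (hB : Convex ℝ B) (h0B : (0 : Fin 4 → ℝ) ∈ B)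
    (f : (Fin 4 → ℝ) → (Fin 4 → ℝ)) (hf0 : f 0 = 0)
    (J : (Fin 4 → ℝ) → Matrix (Fin 4) (Fin 4) ℝ)
    (hderiv : ∀ x ∈ B, HasFDerivWithinAt f ((J x).mulVecLin.toContinuousLinearMap) B x)
    (c K : ℝ) (hc : 0 < c)
    (hA11 : ∀ x ∈ B, c < J x 0 0)
    (hA12 : ∀ x ∈ B, |J x 0 1| + |J x 0 2| + |J x 0 3| ≤ K)
    (m : ℝ) (hm : m = c - K * max a₁ (max a₂ a₃)) :
    ∀ v ∈ B, |v 1| ≤ a₁ * |v 0| → |v 2| ≤ a₂ * |v 0| → |v 3| ≤ a₃ * |v 0| →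
      m * ‖v‖ ≤ ‖f v‖ :=
  expansion_in_cones_general a₁ a₂ a₃ ha₁ ha₂ ha₃ B hB h0B f hf0 J hderiv c K hA11 hA12 m hm
end

section
/- Let f_ε, f_ε¹, f_ε² be families of maps on a normed space with f_ε = f_ε² ∘ f_ε¹, and define g(ε,x) = (f_ε(x) − f₀(x))/ε, g₁(ε,x) = (f_ε¹(x) − f₀¹(x))/ε, g₂(ε,x) = (f_ε²(x) − f₀²(x))/ε (with g(0,x), g₁(0,x), g₂(0,x) the limits as ε → 0, assumed to exist, with the families C¹ in ε). Suppose a functional π_I satisfies ‖π_I(g₁(0,x₁) − g₁(0,x₀))‖ ≤ L_g¹‖x₁ − x₀‖, ‖π_I(g₂(0,x₁) − g₂(0,x₀))‖ ≤ L_g²‖x₁ − x₀‖ for all x₀, x₁, and that f₀¹ is Lipschitz with constant L_f¹. Then ‖π_I(g(0,x₁) − g(0,x₀))‖ ≤ (L_g²·L_f¹ + L_g¹)·‖x₁ − x₀‖ for all x₀, x₁. -/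
/-!
Away from `ε = 0` the identity `π_I (f₀² y) = π_I y` splits the difference quotient of the
composition exactly: `π_I g(ε,x) = π_I g₂(ε, f_ε¹ x) + π_I g₁(ε,x)`. Hence
`‖π_I (g(ε,x₁) - g(ε,x₀))‖ ≤ L₂ ‖f_ε¹ x₁ - f_ε¹ x₀‖ + L₁ ‖x₁ - x₀‖ + o(1)`, and letting `ε → 0`,
using that `f_ε¹ x → f₀¹ x` because `ε ↦ f_ε¹ x` is differentiable at `0` with derivative
`g₁(0,x)`, leaves `L₂ ‖f₀¹ x₁ - f₀¹ x₀‖ + L₁ ‖x₁ - x₀‖ ≤ (L₂ L_f + L₁) ‖x₁ - x₀‖`; here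
`L₂ ≥ 0` because the `g₂` estimate at `x₀ ≠ x₁` forces `0 ≤ L₂ ‖x₁ - x₀‖ + o(1)`.
-/

open Filter Topology

theorem nonneg_of_forall_nonneg_add_of_tendsto {α : Type*} {l : Filter α} [l.NeBot]
    {c : ℝ} {e : α → ℝ} (h : ∀ a, 0 ≤ c + e a) (he : Tendsto e l (𝓝 0)) : 0 ≤ c := by
  simpa using ge_of_tendsto (he.const_add c) (Eventually.of_forall h)

section DiffQuot

variable {𝕜 E : Type*} [NontriviallyNormedField 𝕜] [NormedAddCommGroup E] [NormedSpace 𝕜 E]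

theorem hasDerivAt_zero_of_tendsto_diffQuot {φ γ : 𝕜 → E}
    (hγ : ∀ ε ≠ 0, γ ε = ε⁻¹ • (φ ε - φ 0)) (hlim : Tendsto γ (𝓝[≠] 0) (𝓝 (γ 0))) :
    HasDerivAt φ (γ 0) 0 := by
  rw [hasDerivAt_iff_tendsto_slope]
  refine hlim.congr' (eventually_mem_nhdsWithin.mono fun ε hε => ?_)
  rw [hγ ε hε, slope_def_module, sub_zero]

theorem map_diffQuot_comp_eq_add (π : E →L[𝕜] 𝕜) (f1 f2 : 𝕜 → E → E)
    (hπ : ∀ y, π (f2 0 y) = π y) (ε : 𝕜) (x : E) :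
    π (ε⁻¹ • (f2 ε (f1 ε x) - f2 0 (f1 0 x)))
      = π (ε⁻¹ • (f2 ε (f1 ε x) - f2 0 (f1 ε x))) + π (ε⁻¹ • (f1 ε x - f1 0 x)) := by
  simp only [map_smul, map_sub, hπ, smul_eq_mul]
  ring

end DiffQuot

theorem lipschitz_perturbation_composition_general
    {E : Type*} [NormedAddCommGroup E] [NormedSpace ℝ E]
    (f f1 f2 : ℝ → E → E) (g g1 g2 : ℝ → E → E)
    (πI : E →L[ℝ] ℝ) (L1 L2 Lf : ℝ)
    (hcomp : ∀ ε x, f ε x = f2 ε (f1 ε x))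
    (hg : ∀ ε : ℝ, ε ≠ 0 → ∀ x, g ε x = ε⁻¹ • (f ε x - f 0 x))
    (hg1 : ∀ ε : ℝ, ε ≠ 0 → ∀ x, g1 ε x = ε⁻¹ • (f1 ε x - f1 0 x))
    (hg2 : ∀ ε : ℝ, ε ≠ 0 → ∀ x, g2 ε x = ε⁻¹ • (f2 ε x - f2 0 x))
    -- the perturbation terms extend continuously to `ε = 0`
    (hglim : ∀ x, Tendsto (fun ε => g ε x) (𝓝[≠] (0:ℝ)) (𝓝 (g 0 x)))
    (hg1lim : ∀ x, Tendsto (fun ε => g1 ε x) (𝓝[≠] (0:ℝ)) (𝓝 (g1 0 x)))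
    -- Lipschitz estimates for `g₁(ε,·)`, `g₂(ε,·)` up to `o(1)` errors as `ε → 0`
    (e1 e2 : ℝ → ℝ)
    (he1 : Tendsto e1 (𝓝[≠] (0:ℝ)) (𝓝 0)) (he2 : Tendsto e2 (𝓝[≠] (0:ℝ)) (𝓝 0))
    (hg1Lip : ∀ ε : ℝ, ∀ x₀ x₁, ‖πI (g1 ε x₁ - g1 ε x₀)‖ ≤ L1 * ‖x₁ - x₀‖ + e1 ε)
    (hg2Lip : ∀ ε : ℝ, ∀ x₀ x₁, ‖πI (g2 ε x₁ - g2 ε x₀)‖ ≤ L2 * ‖x₁ - x₀‖ + e2 ε)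
    -- `f₀¹` is Lipschitz with constant `Lf`
    (hf1Lip : ∀ x₀ x₁, ‖f1 0 x₁ - f1 0 x₀‖ ≤ Lf * ‖x₁ - x₀‖)
    -- the unperturbed map `f₀²` preserves the energy coordinate `π_I`
    (hIpres : ∀ y, πI (f2 0 y) = πI y) :
    ∀ x₀ x₁, ‖πI (g 0 x₁ - g 0 x₀)‖ ≤ (L2 * Lf + L1) * ‖x₁ - x₀‖ := by
  intro x₀ x₁
  rcases eq_or_ne x₁ x₀ with rfl | hne
  · simp
  have hL2 : 0 ≤ L2 := nonneg_of_mul_nonneg_left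
    (nonneg_of_forall_nonneg_add_of_tendsto (fun ε => (norm_nonneg _).trans (hg2Lip ε x₀ x₁)) he2)
    (norm_pos_iff.2 (sub_ne_zero.2 hne))
  have hf1cont (x : E) : Tendsto (fun ε => f1 ε x) (𝓝[≠] 0) (𝓝 (f1 0 x)) :=
    tendsto_nhdsWithin_of_tendsto_nhds
      (hasDerivAt_zero_of_tendsto_diffQuot (hg1 · · x) (hg1lim x)).continuousAt.tendsto
  have hsplit : ∀ ε ≠ 0, ∀ x, πI (g ε x) = πI (g2 ε (f1 ε x)) + πI (g1 ε x) := by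
    intro ε hε x
    rw [hg ε hε, hg2 ε hε, hg1 ε hε, hcomp, hcomp]
    exact map_diffQuot_comp_eq_add πI f1 f2 hIpres ε x
  have hstep : ∀ ε ≠ 0, ‖πI (g ε x₁ - g ε x₀)‖
      ≤ L2 * ‖f1 ε x₁ - f1 ε x₀‖ + e2 ε + (L1 * ‖x₁ - x₀‖ + e1 ε) := by
    intro ε hε
    rw [map_sub, hsplit ε hε, hsplit ε hε, add_sub_add_comm, ← map_sub, ← map_sub]
    exact norm_add_le_of_le (hg2Lip ε _ _) (hg1Lip ε _ _)
  have hlimit : ‖πI (g 0 x₁ - g 0 x₀)‖ ≤ L2 * ‖f1 0 x₁ - f1 0 x₀‖ + L1 * ‖x₁ - x₀‖ := by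
    refine le_of_tendsto_of_tendsto
      ((πI.continuous.tendsto _).comp ((hglim x₁).sub (hglim x₀))).norm ?_
      (eventually_mem_nhdsWithin.mono hstep)
    simpa using ((((hf1cont x₁).sub (hf1cont x₀)).norm.const_mul L2).add he2).add
      (he1.const_add (L1 * ‖x₁ - x₀‖))
  calc ‖πI (g 0 x₁ - g 0 x₀)‖ ≤ L2 * ‖f1 0 x₁ - f1 0 x₀‖ + L1 * ‖x₁ - x₀‖ := hlimit
    _ ≤ L2 * (Lf * ‖x₁ - x₀‖) + L1 * ‖x₁ - x₀‖ := by gcongr; exact hf1Lip x₀ x₁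
    _ = (L2 * Lf + L1) * ‖x₁ - x₀‖ := by ring

/-- **Lipschitz bound for the perturbation term of a composition.** If `f_ε = f_ε² ∘ f_ε¹`,
the first-order perturbation terms `g, g₁, g₂` exist as limits, `π_I ∘ g₁(ε,·)` and
`π_I ∘ g₂(ε,·)` are Lipschitz with constants `L₁, L₂` up to `o(1)` errors, `f₀¹` is Lipschitz
with constant `Lf`, and `π_I` (the energy coordinate) is preserved by the unperturbed map
`f₀²`, then `π_I ∘ g(0,·)` is Lipschitz with constant `L₂·Lf + L₁`. -/
theorem lipschitz_perturbation_composition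
    {E : Type*} [NormedAddCommGroup E] [NormedSpace ℝ E]
    (f f1 f2 : ℝ → E → E) (g g1 g2 : ℝ → E → E)
    (πI : E →L[ℝ] ℝ) (L1 L2 Lf : ℝ)
    (hcomp : ∀ ε x, f ε x = f2 ε (f1 ε x))
    (hg : ∀ ε : ℝ, ε ≠ 0 → ∀ x, g ε x = ε⁻¹ • (f ε x - f 0 x))
    (hg1 : ∀ ε : ℝ, ε ≠ 0 → ∀ x, g1 ε x = ε⁻¹ • (f1 ε x - f1 0 x))
    (hg2 : ∀ ε : ℝ, ε ≠ 0 → ∀ x, g2 ε x = ε⁻¹ • (f2 ε x - f2 0 x))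
    -- the perturbation terms extend continuously to `ε = 0`
    (hglim : ∀ x, Tendsto (fun ε => g ε x) (𝓝[≠] (0:ℝ)) (𝓝 (g 0 x)))
    (hg1lim : ∀ x, Tendsto (fun ε => g1 ε x) (𝓝[≠] (0:ℝ)) (𝓝 (g1 0 x)))
    (hg2lim : ∀ x, Tendsto (fun ε => g2 ε x) (𝓝[≠] (0:ℝ)) (𝓝 (g2 0 x)))
    -- Lipschitz estimates for `g₁(ε,·)`, `g₂(ε,·)` up to `o(1)` errors as `ε → 0`
    (e1 e2 : ℝ → ℝ)
    (he1 : Tendsto e1 (𝓝[≠] (0:ℝ)) (𝓝 0)) (he2 : Tendsto e2 (𝓝[≠] (0:ℝ)) (𝓝 0))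
    (hg1Lip : ∀ ε : ℝ, ∀ x₀ x₁, ‖πI (g1 ε x₁ - g1 ε x₀)‖ ≤ L1 * ‖x₁ - x₀‖ + e1 ε)
    (hg2Lip : ∀ ε : ℝ, ∀ x₀ x₁, ‖πI (g2 ε x₁ - g2 ε x₀)‖ ≤ L2 * ‖x₁ - x₀‖ + e2 ε)
    -- `f₀¹` is Lipschitz with constant `Lf`
    (hf1Lip : ∀ x₀ x₁, ‖f1 0 x₁ - f1 0 x₀‖ ≤ Lf * ‖x₁ - x₀‖)
    -- the unperturbed map `f₀²` preserves the energy coordinate `π_I`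
    (hIpres : ∀ y, πI (f2 0 y) = πI y) :
    ∀ x₀ x₁, ‖πI (g 0 x₁ - g 0 x₀)‖ ≤ (L2 * Lf + L1) * ‖x₁ - x₀‖ :=
  lipschitz_perturbation_composition_general f f1 f2 g g1 g2 πI L1 L2 Lf hcomp hg hg1 hg2 hglim
    hg1lim e1 e2 he1 he2 hg1Lip hg2Lip hf1Lip hIpres
end

section
/- Let F : ℝ × ℝ × (ℝ⁴)ⁿ → (ℝ⁴)ⁿ × ℝ × ℝ be defined by F(s, τ, x₁, …, xₙ) = (Φ_τ(p(s)) − x₁, Φ_τ(x₁) − x₂, …, Φ_τ(x_{n−1}) − xₙ, π_Y Φ_τ(xₙ), π_{P_X} Φ_τ(xₙ)), where Φ is a flow on ℝ⁴ with time-reversing symmetry R∘Φ_t = Φ_{−t}∘R for R(X,Y,P_X,P_Y) = (X,−Y,−P_X,P_Y), and p : ℝ → ℝ⁴ is C¹. Suppose F(s, τ, x₁, …, xₙ) = 0. Set x₀ = p(s), x_{n+1} = Φ_τ(xₙ), and x_{n+k} = R(x_{n+2−k}) for k = 2, …, n+2. Then Φ_τ(x_i) = x_{i+1} for all i = 0,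 …, 2n+1. -/
/-- The time-reversing symmetry `R(X,Y,P_X,P_Y) = (X,−Y,−P_X,P_Y)` of the PCR3BP. -/
def Rsym (v : Fin 4 → ℝ) : Fin 4 → ℝ := ![v 0, -(v 1), -(v 2), v 3]

/-- **Parallel shooting for `R`-symmetric orbits.** If the shooting operator vanishes, i.e.
`x₀ = p(s)`, `Φ_τ(x_i) = x_{i+1}` for `i = 0,…,n` (with `x_{n+1} := Φ_τ(x_n)`), and the `Y`
and `P_X` coordinates of `x_{n+1}` vanish, then setting `x_{n+k} = R(x_{n+2−k})` for
`k = 2,…,n+2` yields `Φ_τ(x_i) = x_{i+1}` for all `i = 0,…,2n+1`. -/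
theorem parallel_shooting_symmetric_orbit
    (Φ : ℝ → (Fin 4 → ℝ) → (Fin 4 → ℝ))
    (hΦ0 : ∀ y, Φ 0 y = y)
    (hΦadd : ∀ s t y, Φ (s + t) y = Φ s (Φ t y))
    (hrev : ∀ t y, Rsym (Φ t y) = Φ (-t) (Rsym y))
    (p : ℝ → (Fin 4 → ℝ)) (hp : ContDiff ℝ 1 p)
    (n : ℕ) (s τ : ℝ) (x : ℕ → (Fin 4 → ℝ))
    (h0 : x 0 = p s)
    (hfwd : ∀ i ≤ n, Φ τ (x i) = x (i + 1))
    (hY : x (n + 1) 1 = 0) (hPX : x (n + 1) 2 = 0)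
    (hsym : ∀ k, 2 ≤ k → k ≤ n + 2 → x (n + k) = Rsym (x (n + 2 - k))) :
    ∀ i ≤ 2 * n + 1, Φ τ (x i) = x (i + 1) := by

  have hfix : Rsym (x (n+1)) = x (n+1) := by
    funext j; fin_cases j <;> simp [Rsym, hY, hPX]
  have hsym' : ∀ k, 1 ≤ k → k ≤ n + 2 → x (n + k) = Rsym (x (n + 2 - k)) := by
    intro k h1 h2
    rcases eq_or_lt_of_le h1 with h | h
    · subst h; simpa using hfix.symm
    · exact hsym k h h2
  intro i hi
  by_cases hin : i ≤ n
  · exact hfwd i hin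
  · obtain ⟨k, rfl, hk1, hk2⟩ : ∃ k, i = n + k ∧ 1 ≤ k ∧ k ≤ n + 1 := by
      refine ⟨i - n, by omega, by omega, by omega⟩
    have e1 : x (n + k) = Rsym (x (n + 2 - k)) := hsym' k hk1 (by omega)
    have e2 : Φ τ (x (n + 1 - k)) = x (n + 2 - k) := by
      have := hfwd (n + 1 - k) (by omega)
      rwa [show n + 1 - k + 1 = n + 2 - k by omega] at this
    have e3 : Φ (-τ) (x (n + 2 - k)) = x (n + 1 - k) := by
      rw [← e2, ← hΦadd, neg_add_cancel, hΦ0]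
    have e4 : x (n + k + 1) = Rsym (x (n + 1 - k)) := by
      have := hsym' (k + 1) (by omega) (by omega)
      rwa [show n + (k + 1) = n + k + 1 by omega, show n + 2 - (k + 1) = n + 1 - k by omega] at this
    rw [e1, e4, ← e3, hrev, neg_neg]
end
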